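/- Let (X,ρ) and (X',ρ') be separable metric spaces, q ∈ ℝ, μ a Borel probability measure on X, ν a Borel probability measure on X', and h, h' Hausdorff functions. Then for any E ⊆ X and F ⊆ X', W^{q,h×h'}_{μ×ν}(E×F) ≥ W^{q,h}_μ(E) · W^{q,h'}_ν(F), where the product space X×X' carries the metric max(ρ,ρ') and the measure W^{q,h×h'}_{μ×ν} is constructed from the premeasure ξ_{h×h'} on X×X'. -/

import Mathlib

/-!
A weighted `δ`-cover of `A × B` consists of balls `Bᵢ × B'ᵢ` (balls of the max metric are products
of balls of equal radius) with weights `wᵢ`, and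
`(μ × ν)(Bᵢ × B'ᵢ)^q ξ_{h×h'}(Bᵢ × B'ᵢ) ≥ μ(Bᵢ)^q ξ_h(Bᵢ) · ν(B'ᵢ)^q ξ_{h'}(B'ᵢ)`.
For fixed `y ∈ B`, the balls `Bᵢ` with `y ∈ B'ᵢ` form a weighted cover of `A`, so
`W_δ(A) ≤ Σ_{i : y ∈ B'ᵢ} wᵢ μ(Bᵢ)^q ξ_h(Bᵢ)`. Hence for `a < W_δ(A)` the weights
`wᵢ μ(Bᵢ)^q ξ_h(Bᵢ) / a` make the `B'ᵢ` a weighted cover of `B`, and `a · W_δ(B)` is at most the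
cost of the original cover. Suprema over `δ` and then over subsets finish the proof.
-/

open Metric MeasureTheory Set Filter TopologicalSpace
open scoped ENNReal NNReal Classical

noncomputable section

/-- `x ^ q` for extended nonnegative reals, with the paper's convention
`0 ^ q = ∞` for `q ≤ 0`. -/
def epow (x : ℝ≥0∞) (q : ℝ) : ℝ≥0∞ := if x = 0 ∧ q ≤ 0 then ∞ else x ^ q

variable {X X' : Type*}

section Defs

variable [MetricSpace X] [MetricSpace X']

/-- A premeasure on a metric space: an increasing `[0,∞]`-valued function on the family of
closed balls, vanishing on the empty set. -/
def IsPremeasure (ξ : Set X → ℝ≥0∞) : Prop :=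
  ξ ∅ = 0 ∧ ∀ (x : X) (r : ℝ) (x' : X) (r' : ℝ),
    closedBall x r ⊆ closedBall x' r' → ξ (closedBall x r) ≤ ξ (closedBall x' r')

/-- The doubling ("blanketed") condition defining the class `Φ_D` of premeasures:
`ξ(B(x,2r)) ≤ K ξ(B(x,r))` for some constant `K > 1`, all `x` and all `0 < r ≤ 1`. -/
def PremeasureBlanketed (ξ : Set X → ℝ≥0∞) : Prop :=
  ∃ K : ℝ≥0, 1 < K ∧ ∀ (x : X) (r : ℝ), 0 < r → r ≤ 1 →
    ξ (closedBall x (2 * r)) ≤ (K : ℝ≥0∞) * ξ (closedBall x r)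

variable [MeasurableSpace X] [MeasurableSpace X']

/-- The support of a Borel measure on a metric space. -/
def measSupport (μ : Measure X) : Set X := {x : X | ∀ r : ℝ, 0 < r → 0 < μ (ball x r)}

/-- A blanketed (doubling) measure: for some `a > 1`,
`limsup_{r → 0⁺} sup_{x ∈ supp μ} μ(B(x,ar)) / μ(B(x,r)) < ∞`. -/
def MeasureBlanketed (μ : Measure X) : Prop :=
  ∃ a : ℝ, 1 < a ∧
    limsup (fun r : ℝ => ⨆ x ∈ measSupport μ,
      μ (closedBall x (a * r)) / μ (closedBall x r)) (nhdsWithin 0 (Ioi 0)) < ∞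

/-- The quantity `μ(B)^q ξ(B)` attached to a ball `B`. -/
def ballWeight (μ : Measure X) (q : ℝ) (ξ : Set X → ℝ≥0∞) (B : Set X) : ℝ≥0∞ :=
  epow (μ B) q * ξ B

/-- A centered `δ`-cover of `E`: countably many closed balls centered in `E`, of diameters
at most `2δ`, covering `E`. -/
def IsCenteredCover (E : Set X) (δ : ℝ) (c : ℕ → X) (r : ℕ → ℝ) : Prop :=
  (∀ i, c i ∈ E) ∧ (∀ i, diam (closedBall (c i) (r i)) ≤ 2 * δ) ∧
    E ⊆ ⋃ i, closedBall (c i) (r i)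

/-- The pre-Hausdorff quantity `H^{q,ξ}_{μ,δ}(E)`. -/
def Hd (μ : Measure X) (q : ℝ) (ξ : Set X → ℝ≥0∞) (δ : ℝ) (E : Set X) : ℝ≥0∞ :=
  if E = ∅ then 0 else
    ⨅ (c : ℕ → X) (r : ℕ → ℝ) (_ : IsCenteredCover E δ c r),
      ∑' i, ballWeight μ q ξ (closedBall (c i) (r i))

/-- `H^{q,ξ}_{μ,0}(E) = sup_{δ > 0} H^{q,ξ}_{μ,δ}(E)`. -/
def H0 (μ : Measure X) (q : ℝ) (ξ : Set X → ℝ≥0∞) (E : Set X) : ℝ≥0∞ :=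
  ⨆ (δ : ℝ) (_ : 0 < δ), Hd μ q ξ δ E

/-- The generalized Hausdorff measure `H^{q,ξ}_μ(E) = sup_{F ⊆ E} H^{q,ξ}_{μ,0}(F)`. -/
def HM (μ : Measure X) (q : ℝ) (ξ : Set X → ℝ≥0∞) (E : Set X) : ℝ≥0∞ :=
  ⨆ (F : Set X) (_ : F ⊆ E), H0 μ q ξ F

/-- A weighted and centered `δ`-cover of `E`: countably many pairs `(w i, B i)` of nonnegative
weights and closed balls centered in `E` of diameters at most `2δ`, with
`Σ {w i : x ∈ B i} ≥ 1` for every `x ∈ E`. -/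
def IsWeightedCover (E : Set X) (δ : ℝ) (w : ℕ → ℝ≥0) (c : ℕ → X) (r : ℕ → ℝ) : Prop :=
  (∀ i, c i ∈ E) ∧ (∀ i, diam (closedBall (c i) (r i)) ≤ 2 * δ) ∧
    ∀ x ∈ E, 1 ≤ ∑' i, (if x ∈ closedBall (c i) (r i) then (w i : ℝ≥0∞) else 0)

/-- The pre-weighted-Hausdorff quantity `W^{q,ξ}_{μ,δ}(E)`. -/
def Wd (μ : Measure X) (q : ℝ) (ξ : Set X → ℝ≥0∞) (δ : ℝ) (E : Set X) : ℝ≥0∞ :=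
  if E = ∅ then 0 else
    ⨅ (w : ℕ → ℝ≥0) (c : ℕ → X) (r : ℕ → ℝ) (_ : IsWeightedCover E δ w c r),
      ∑' i, (w i : ℝ≥0∞) * ballWeight μ q ξ (closedBall (c i) (r i))

/-- `W^{q,ξ}_{μ,0}(E) = sup_{δ > 0} W^{q,ξ}_{μ,δ}(E)`. -/
def W0 (μ : Measure X) (q : ℝ) (ξ : Set X → ℝ≥0∞) (E : Set X) : ℝ≥0∞ :=
  ⨆ (δ : ℝ) (_ : 0 < δ), Wd μ q ξ δ E

/-- The weighted generalized Hausdorff measure `W^{q,ξ}_μ(E) = sup_{F ⊆ E} W^{q,ξ}_{μ,0}(F)`. -/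
def WM (μ : Measure X) (q : ℝ) (ξ : Set X → ℝ≥0∞) (E : Set X) : ℝ≥0∞ :=
  ⨆ (F : Set X) (_ : F ⊆ E), W0 μ q ξ F

/-- Hypothesis (H) for `(X, ξ, μ)`: for every `ε > 0`, `X` can be covered by countably many
closed balls of diameters `< ε` on which `μ(B)^q ξ(B)` is finite. -/
def HypH (μ : Measure X) (q : ℝ) (ξ : Set X → ℝ≥0∞) : Prop :=
  ∀ ε : ℝ, 0 < ε → ∃ (c : ℕ → X) (r : ℕ → ℝ),
    (univ : Set X) ⊆ (⋃ i, closedBall (c i) (r i)) ∧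
    (∀ i, diam (closedBall (c i) (r i)) < ε) ∧
    ∀ i, ballWeight μ q ξ (closedBall (c i) (r i)) < ∞

/-- The product premeasure `ξ₀(B × B') = ξ(B) ξ'(B')` on the product space (whose closed balls
are exactly the products `B(x,r) × B(x',r)`), with the convention `0 ⬝ ∞ = ∞ ⬝ 0 = 0`. -/
def prodPre (ξ : Set X → ℝ≥0∞) (ξ' : Set X' → ℝ≥0∞) : Set (X × X') → ℝ≥0∞ :=
  fun S => ξ (Prod.fst '' S) * ξ' (Prod.snd '' S)

/-- Two sets are (positively) separated: `inf {ρ(x,y) : x ∈ E, y ∈ F} > 0`. -/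
def SepSets (E F : Set X) : Prop := 0 < ⨅ x ∈ E, ⨅ y ∈ F, edist x y

/-- The upper `(q,ξ)`-density of `ν` at `x` with respect to `μ`:
`limsup_{r → 0⁺} ν(B(x,r)) / (μ(B(x,r))^q ξ(B(x,r)))`. -/
def upperDensity (μ : Measure X) (q : ℝ) (ξ : Set X → ℝ≥0∞) (x : X) (ν : Measure X) : ℝ≥0∞ :=
  limsup (fun r : ℝ => ν (closedBall x r) / ballWeight μ q ξ (closedBall x r))
    (nhdsWithin 0 (Ioi 0))

/-- A Hausdorff function: right continuous, monotone increasing `h : [0,∞] → [0,∞]` with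
`h(0) = 0` and `h(r) > 0` for `r > 0`. -/
def IsHausdorffFunction (h : ℝ≥0∞ → ℝ≥0∞) : Prop :=
  Monotone h ∧ h 0 = 0 ∧ (∀ r : ℝ≥0∞, 0 < r → 0 < h r) ∧
    ∀ r : ℝ≥0∞, ContinuousWithinAt h (Ici r) r

/-- The premeasure `ξ_h` induced by a Hausdorff function: `ξ_h(B) = h(diam B)` for `B ≠ ∅`,
`ξ_h(∅) = 0`. -/
def hausPre (h : ℝ≥0∞ → ℝ≥0∞) : Set X → ℝ≥0∞ :=
  fun B => if B = ∅ then 0 else h (EMetric.diam B)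

end Defs

theorem epow_mul_epow_le (a b : ℝ≥0∞) (q : ℝ) : epow a q * epow b q ≤ epow (a * b) q := by
  by_cases hab : a * b = 0 ∧ q ≤ 0
  · simp only [epow, if_pos hab, le_top]
  rcases le_or_gt q 0 with hq | hq
  · obtain ⟨ha, hb⟩ := mul_ne_zero_iff.1 fun h => hab ⟨h, hq⟩
    simp only [epow, ha, hb, mul_ne_zero ha hb, false_and, if_false,
      ENNReal.mul_rpow_of_ne_zero ha hb, le_refl]
  · simp only [epow, hq.not_ge, and_false, if_false, ENNReal.mul_rpow_of_nonneg _ _ hq.le,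
      le_refl]

section ProductMeasure

variable [MeasurableSpace X] [MeasurableSpace X']

theorem ballWeight_mul_le (μ : Measure X) (ν : Measure X') [SFinite ν] (q : ℝ)
    {ξ : Set X → ℝ≥0∞} {ξ' : Set X' → ℝ≥0∞} {ξ'' : Set (X × X') → ℝ≥0∞} (S : Set X) (T : Set X')
    (hξ : ξ S * ξ' T ≤ ξ'' (S ×ˢ T)) :
    ballWeight μ q ξ S * ballWeight ν q ξ' T ≤ ballWeight (μ.prod ν) q ξ'' (S ×ˢ T) := by
  rw [ballWeight, ballWeight, ballWeight, Measure.prod_prod, mul_mul_mul_comm]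
  exact mul_le_mul' (epow_mul_epow_le _ _ q) hξ

end ProductMeasure

section Product

variable [MetricSpace X] [MetricSpace X']

theorem ediam_le_ediam_prod_left (S : Set X) {T : Set X'} (hT : T.Nonempty) :
    Metric.ediam S ≤ Metric.ediam (S ×ˢ T) := by
  simpa [fst_image_prod S hT] using LipschitzWith.prod_fst.ediam_image_le (S ×ˢ T)

theorem ediam_le_ediam_prod_right {S : Set X} (hS : S.Nonempty) (T : Set X') :
    Metric.ediam T ≤ Metric.ediam (S ×ˢ T) := by
  simpa [snd_image_prod hS T] using LipschitzWith.prod_snd.ediam_image_le (S ×ˢ T)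

theorem diam_closedBall_fst_le (p : X × X') (r : ℝ) :
    diam (closedBall p.1 r) ≤ diam (closedBall p r) := by
  rcases lt_or_ge r 0 with hr | hr
  · simp [closedBall_eq_empty.2 hr]
  rw [← closedBall_prod_same]
  exact ENNReal.toReal_mono (isBounded_closedBall.prod isBounded_closedBall).ediam_ne_top
    (ediam_le_ediam_prod_left _ (nonempty_closedBall.2 hr))

theorem diam_closedBall_snd_le (p : X × X') (r : ℝ) :
    diam (closedBall p.2 r) ≤ diam (closedBall p r) := by
  rcases lt_or_ge r 0 with hr | hr
  · simp [closedBall_eq_empty.2 hr]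
  rw [← closedBall_prod_same]
  exact ENNReal.toReal_mono (isBounded_closedBall.prod isBounded_closedBall).ediam_ne_top
    (ediam_le_ediam_prod_right (nonempty_closedBall.2 hr) _)

theorem hausPre_mul_le {h h' : ℝ≥0∞ → ℝ≥0∞} (hh : Monotone h) (hh' : Monotone h')
    (S : Set X) (T : Set X') :
    hausPre h S * hausPre h' T ≤ hausPre (fun r => h r * h' r) (S ×ˢ T) := by
  rcases S.eq_empty_or_nonempty with rfl | hS
  · simp [hausPre]
  rcases T.eq_empty_or_nonempty with rfl | hT
  · simp [hausPre]
  simp only [hausPre, hS.ne_empty, hT.ne_empty, (hS.prod hT).ne_empty, if_false]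
  exact mul_le_mul' (hh (ediam_le_ediam_prod_left S hT)) (hh' (ediam_le_ediam_prod_right hS T))

end Product

section WeightedCover

variable [MetricSpace X] [MeasurableSpace X] {μ : Measure X} {q : ℝ} {ξ : Set X → ℝ≥0∞}
  {δ : ℝ} {E : Set X} {c : ℕ → X} {r : ℕ → ℝ}

theorem Wd_empty : Wd μ q ξ δ ∅ = 0 := if_pos rfl

theorem le_Wd {a : ℝ≥0∞} (hE : E.Nonempty)
    (h : ∀ w c r, IsWeightedCover E δ w c r →
      a ≤ ∑' i, (w i : ℝ≥0∞) * ballWeight μ q ξ (closedBall (c i) (r i))) :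
    a ≤ Wd μ q ξ δ E := by
  rw [Wd, if_neg hE.ne_empty]
  exact le_iInf fun w => le_iInf fun c => le_iInf fun r => le_iInf (h w c r)

theorem Wd_le_tsum_of_isWeightedCover {w : ℕ → ℝ≥0} (hc : IsWeightedCover E δ w c r) :
    Wd μ q ξ δ E ≤ ∑' i, (w i : ℝ≥0∞) * ballWeight μ q ξ (closedBall (c i) (r i)) := by
  rw [Wd]
  split_ifs
  · exact zero_le
  · exact iInf_le_of_le w (iInf_le_of_le c (iInf_le_of_le r (iInf_le _ hc)))

theorem Wd_antitone : Antitone fun δ => Wd μ q ξ δ E := by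
  intro δ δ' hδ
  rcases E.eq_empty_or_nonempty with rfl | hE
  · simp [Wd_empty]
  exact le_Wd hE fun w c r hc => Wd_le_tsum_of_isWeightedCover
    ⟨hc.1, fun i => (hc.2.1 i).trans (by linarith), hc.2.2⟩

theorem Wd_le_tsum (g : ℕ → ℝ≥0∞) (hc : ∀ i, c i ∈ E)
    (hr : ∀ i, diam (closedBall (c i) (r i)) ≤ 2 * δ)
    (hg : ∀ x ∈ E, 1 ≤ ∑' i, if x ∈ closedBall (c i) (r i) then g i else 0) :
    Wd μ q ξ δ E ≤ ∑' i, g i * ballWeight μ q ξ (closedBall (c i) (r i)) := by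
  -- an infinite weight can be replaced by `1`
  set w : ℕ → ℝ≥0 := fun i => if g i = ∞ then 1 else (g i).toNNReal
  have hw_le : ∀ i, (w i : ℝ≥0∞) ≤ g i := fun i => by
    by_cases hgi : g i = ∞
    · simp [hgi]
    · simp [w, hgi]
  refine (Wd_le_tsum_of_isWeightedCover (w := w) ⟨hc, hr, fun x hx => ?_⟩).trans
    (ENNReal.tsum_le_tsum fun i => mul_le_mul_left (hw_le i) _)
  by_cases htop : ∃ i, x ∈ closedBall (c i) (r i) ∧ g i = ∞
  · obtain ⟨i, hxi, hgi⟩ := htop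
    exact le_of_eq_of_le (by simp [w, hxi, hgi]) (ENNReal.le_tsum i)
  push Not at htop
  refine (hg x hx).trans (le_of_eq (tsum_congr fun i => ?_))
  by_cases hxi : x ∈ closedBall (c i) (r i)
  · simp [w, hxi, htop i hxi]
  · simp [hxi]

theorem mul_Wd_le_tsum {a : ℝ≥0∞} (ha : a ≠ ∞) (g : ℕ → ℝ≥0∞) (hc : ∀ i, c i ∈ E)
    (hr : ∀ i, diam (closedBall (c i) (r i)) ≤ 2 * δ)
    (hg : ∀ x ∈ E, a ≤ ∑' i, if x ∈ closedBall (c i) (r i) then g i else 0) :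
    a * Wd μ q ξ δ E ≤ ∑' i, g i * ballWeight μ q ξ (closedBall (c i) (r i)) := by
  rcases eq_or_ne a 0 with rfl | ha0
  · simp
  have hcover : ∀ x ∈ E, 1 ≤ ∑' i, if x ∈ closedBall (c i) (r i) then a⁻¹ * g i else 0 :=
    fun x hx => by
      simp_rw [← mul_ite_zero, ENNReal.tsum_mul_left]
      exact (ENNReal.inv_mul_cancel ha0 ha).symm.le.trans (mul_le_mul_right (hg x hx) _)
  calc a * Wd μ q ξ δ E
      ≤ a * ∑' i, a⁻¹ * g i * ballWeight μ q ξ (closedBall (c i) (r i)) :=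
        mul_le_mul_right (Wd_le_tsum _ hc hr hcover) a
    _ = ∑' i, g i * ballWeight μ q ξ (closedBall (c i) (r i)) := by
        simp_rw [← ENNReal.tsum_mul_left, ← mul_assoc, ENNReal.mul_inv_cancel ha0 ha, one_mul]

end WeightedCover

theorem biSup_mul_biSup_le {ι κ : Type*} {p : ι → Prop} {p' : κ → Prop} {f : ι → ℝ≥0∞}
    {g : κ → ℝ≥0∞} {a : ℝ≥0∞} (h : ∀ i, p i → ∀ j, p' j → f i * g j ≤ a) :
    (⨆ (i) (_ : p i), f i) * (⨆ (j) (_ : p' j), g j) ≤ a := by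
  simp_rw [ENNReal.iSup_mul, ENNReal.mul_iSup]
  exact iSup₂_le fun i hi => iSup₂_le fun j hj => h i hi j hj

section ProductCover

variable [MetricSpace X] [MetricSpace X'] [MeasurableSpace X] {q : ℝ} {δ : ℝ}
  {ξ : Set X → ℝ≥0∞}

theorem Wd_le_tsum_slice (μ : Measure X) {A : Set X} {B : Set X'} {w : ℕ → ℝ≥0}
    {c : ℕ → X × X'} {r : ℕ → ℝ} (hcov : IsWeightedCover (A ×ˢ B) δ w c r) {y : X'}
    (hy : y ∈ B) :
    Wd μ q ξ δ A ≤ ∑' i, if y ∈ closedBall (c i).2 (r i) then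
      (w i : ℝ≥0∞) * ballWeight μ q ξ (closedBall (c i).1 (r i)) else 0 := by
  refine (Wd_le_tsum (fun i => if y ∈ closedBall (c i).2 (r i) then (w i : ℝ≥0∞) else 0)
    (fun i => (hcov.1 i).1) (fun i => (diam_closedBall_fst_le _ _).trans (hcov.2.1 i))
    fun x hx => ?_).trans (le_of_eq (tsum_congr fun i => by split_ifs <;> simp))
  refine (hcov.2.2 (x, y) ⟨hx, hy⟩).trans (le_of_eq (tsum_congr fun i => ?_))
  simp only [mem_closedBall, Prod.dist_eq, max_le_iff, ite_and]

variable [MeasurableSpace X'] {ξ' : Set X' → ℝ≥0∞} {ξ'' : Set (X × X') → ℝ≥0∞}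

theorem Wd_mul_Wd_le_Wd_prod (μ : Measure X) (ν : Measure X') [SFinite ν]
    (hξ : ∀ S T, ξ S * ξ' T ≤ ξ'' (S ×ˢ T)) (A : Set X) (B : Set X') :
    Wd μ q ξ δ A * Wd ν q ξ' δ B ≤ Wd (μ.prod ν) q ξ'' δ (A ×ˢ B) := by
  rcases A.eq_empty_or_nonempty with rfl | hA
  · simp [Wd_empty]
  rcases B.eq_empty_or_nonempty with rfl | hB
  · simp [Wd_empty]
  refine le_Wd (hA.prod hB) fun w c r hcov => ENNReal.mul_le_of_forall_lt fun a ha b hb => ?_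
  set g := fun i => (w i : ℝ≥0∞) * ballWeight μ q ξ (closedBall (c i).1 (r i))
  calc a * b ≤ a * Wd ν q ξ' δ B := mul_le_mul_right hb.le a
    _ ≤ ∑' i, g i * ballWeight ν q ξ' (closedBall (c i).2 (r i)) :=
        mul_Wd_le_tsum ha.ne_top g (fun i => (hcov.1 i).2)
          (fun i => (diam_closedBall_snd_le _ _).trans (hcov.2.1 i))
          fun y hy => ha.le.trans (Wd_le_tsum_slice μ hcov hy)
    _ ≤ ∑' i, (w i : ℝ≥0∞) * ballWeight (μ.prod ν) q ξ'' (closedBall (c i) (r i)) := by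
        refine ENNReal.tsum_le_tsum fun i => ?_
        rw [mul_assoc, ← closedBall_prod_same]
        exact mul_le_mul_right (ballWeight_mul_le μ ν q _ _ (hξ _ _)) _

theorem W0_mul_W0_le_W0_prod (μ : Measure X) (ν : Measure X') [SFinite ν]
    (hξ : ∀ S T, ξ S * ξ' T ≤ ξ'' (S ×ˢ T)) (A : Set X) (B : Set X') :
    W0 μ q ξ A * W0 ν q ξ' B ≤ W0 (μ.prod ν) q ξ'' (A ×ˢ B) :=
  biSup_mul_biSup_le fun δ hδ δ' hδ' =>
    (mul_le_mul' (Wd_antitone (min_le_left δ δ')) (Wd_antitone (min_le_right δ δ'))).trans <|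
      (Wd_mul_Wd_le_Wd_prod μ ν hξ A B).trans (le_iSup₂_of_le (min δ δ') (lt_min hδ hδ') le_rfl)

theorem WM_mul_WM_le_WM_prod (μ : Measure X) (ν : Measure X') [SFinite ν]
    (hξ : ∀ S T, ξ S * ξ' T ≤ ξ'' (S ×ˢ T)) (E : Set X) (F : Set X') :
    WM μ q ξ E * WM ν q ξ' F ≤ WM (μ.prod ν) q ξ'' (E ×ˢ F) :=
  biSup_mul_biSup_le fun A hA B hB =>
    (W0_mul_W0_le_W0_prod μ ν hξ A B).trans (le_iSup₂_of_le (A ×ˢ B) (prod_mono hA hB) le_rfl)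

end ProductCover

section Thms

variable [MetricSpace X] [SeparableSpace X] [MeasurableSpace X] [BorelSpace X]
variable [MetricSpace X'] [SeparableSpace X'] [MeasurableSpace X'] [BorelSpace X']

theorem stmt16_general (q : ℝ) (μ : Measure X)
    (ν : Measure X') [IsProbabilityMeasure ν]
    (h h' : ℝ≥0∞ → ℝ≥0∞) (hh : IsHausdorffFunction h) (hh' : IsHausdorffFunction h')
    (E : Set X) (F : Set X') :
    WM μ q (hausPre h) E * WM ν q (hausPre h') F ≤
      WM (μ.prod ν) q (hausPre fun r => h r * h' r) (E ×ˢ F) :=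
  WM_mul_WM_le_WM_prod μ ν (hausPre_mul_le hh.1 hh'.1) E F

theorem stmt16 (q : ℝ) (μ : Measure X) [IsProbabilityMeasure μ]
    (ν : Measure X') [IsProbabilityMeasure ν]
    (h h' : ℝ≥0∞ → ℝ≥0∞) (hh : IsHausdorffFunction h) (hh' : IsHausdorffFunction h')
    (E : Set X) (F : Set X') :
    WM μ q (hausPre h) E * WM ν q (hausPre h') F ≤
      WM (μ.prod ν) q (hausPre fun r => h r * h' r) (E ×ˢ F) :=
  stmt16_general q μ ν h h' hh hh' E F

end Thms
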